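/- arXiv:1204.2888 — 2 statements merged into one kernel-verified Lean document; each statement's English description precedes it below -/
import Mathlib

section
/- Let Δ be an obtuse basis of V, let A ⊆ B ⊆ C ⊆ Δ be subsets, and let (ϖ_γ)_{γ ∈ C∖A} be the dual basis Δ̂_A^C. Then for every H ∈ V, the sum ∑_{S : A ⊆ S ⊆ B} (−1)^{|B∖S|} τ̂_S^C(H), taken over all subsets S of Δ with A ⊆ S ⊆ B, equals 1 if ⟨ϖ_γ, H⟩ ≤ 0 for every γ ∈ B∖A and ⟨ϖ_γ, H⟩ > 0 for every γ ∈ C∖B, and equals 0 otherwise. -/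
open scoped RealInnerProductSpace Classical

variable {V : Type*} [NormedAddCommGroup V] [InnerProductSpace ℝ V] [FiniteDimensional ℝ V]
  [DecidableEq V]

/-- The orthogonal projection of `γ` onto the orthogonal complement of the span of `A`
(denoted `γ_A`). -/
noncomputable def projPerp (A : Finset V) (γ : V) : V :=
  (Submodule.orthogonalProjectionOnto (Submodule.span ℝ (A : Set V))ᗮ γ : V)

/-- The characteristic function `τ_A^B` : equal to `1` if `⟪γ_A, H⟫ > 0` for every
`γ ∈ B \ A`, and `0` otherwise. -/
noncomputable def tauFn (A B : Finset V) (H : V) : ℝ :=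
  if ∀ γ ∈ B \ A, 0 < ⟪projPerp A γ, H⟫ then 1 else 0

/-- The characteristic function `τ̂_A^B` (relative to a family `ϖ` of dual bases):
equal to `1` if `⟪ϖ A B γ, H⟫ > 0` for every `γ ∈ B \ A`, and `0` otherwise. -/
noncomputable def tauHatFn (ϖ : Finset V → Finset V → V → V) (A B : Finset V) (H : V) : ℝ :=
  if ∀ γ ∈ B \ A, 0 < ⟪ϖ A B γ, H⟫ then 1 else 0

/-- `ϖ` is a family of dual bases: for all `A ⊆ B ⊆ Δ`, the family `(ϖ A B γ)_{γ ∈ B \ A}`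
is the dual basis `Δ̂_A^B` of `Δ_A^B = (γ_A)_{γ ∈ B \ A}` in
`V_A^B = span B ⊓ (span A)ᗮ`. -/
def IsDualFamily (Δ : Finset V) (ϖ : Finset V → Finset V → V → V) : Prop :=
  ∀ A B : Finset V, A ⊆ B → B ⊆ Δ → ∀ γ ∈ B \ A,
    (ϖ A B γ ∈ Submodule.span ℝ (B : Set V) ⊓ (Submodule.span ℝ (A : Set V))ᗮ) ∧
    ∀ δ ∈ B \ A, ⟪ϖ A B γ, projPerp A δ⟫ = if δ = γ then 1 else 0

/-
The dual vector `ϖ_γ` of `Δ̂_S^C` does not depend on `S`: it lies in `span C` and its inner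
products with the elements of `C` are `δ_{γβ}` whatever `S` is. Hence
`τ̂_S^C(H) = ∏_{γ ∈ C∖S} [⟪ϖ_γ, H⟫ > 0]` with `ϖ_γ` taken from `Δ̂_A^C`, and the alternating sum
over `A ⊆ S ⊆ B` factors by inclusion–exclusion as
`∏_{γ ∈ C∖B} [⟪ϖ_γ, H⟫ > 0] · ∏_{γ ∈ B∖A} (1 - [⟪ϖ_γ, H⟫ > 0])`.
-/

theorem eq_of_mem_span_of_forall_inner_eq {𝕜 E : Type*} [RCLike 𝕜] [NormedAddCommGroup E]
    [InnerProductSpace 𝕜 E] {s : Set E} {x y : E} (hx : x ∈ Submodule.span 𝕜 s)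
    (hy : y ∈ Submodule.span 𝕜 s) (h : ∀ v ∈ s, inner 𝕜 x v = inner 𝕜 y v) : x = y := by
  have h_span : ∀ v ∈ Submodule.span 𝕜 s, inner 𝕜 x v = inner 𝕜 y v := fun v hv =>
    LinearMap.eqOn_span (f := innerₛₗ 𝕜 x) (g := innerₛₗ 𝕜 y) h hv
  have h_orth : x - y ∈ (Submodule.span 𝕜 s)ᗮ :=
    Submodule.sub_mem_orthogonal_of_inner_left fun v => h_span v v.2
  exact sub_eq_zero.1 <| inner_self_eq_zero.1 <|
    Submodule.inner_right_of_mem_orthogonal (Submodule.sub_mem _ hx hy) h_orth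

omit [FiniteDimensional ℝ V] [DecidableEq V] in
theorem inner_projPerp_of_mem_orthogonal {A : Finset V} {x : V}
    (hx : x ∈ (Submodule.span ℝ (A : Set V))ᗮ) (δ : V) :
    ⟪x, projPerp A δ⟫ = ⟪x, δ⟫ := by
  rw [projPerp, ← Submodule.starProjection_apply, ← Submodule.inner_starProjection_left_eq_right,
    Submodule.starProjection_eq_self_iff.2 hx]

namespace IsDualFamily

variable {Δ : Finset V} {ϖ : Finset V → Finset V → V → V}

omit [FiniteDimensional ℝ V] in
theorem inner_eq_ite (hϖ : IsDualFamily Δ ϖ) {A C : Finset V} (hAC : A ⊆ C) (hCΔ : C ⊆ Δ)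
    {γ v : V} (hγ : γ ∈ C \ A) (hv : v ∈ C) :
    ⟪ϖ A C γ, v⟫ = if v = γ then 1 else 0 := by
  obtain ⟨hmem, hdual⟩ := hϖ A C hAC hCΔ γ hγ
  by_cases hvA : v ∈ A
  · rw [if_neg (ne_of_mem_of_not_mem hvA (Finset.mem_sdiff.1 hγ).2)]
    exact (Submodule.mem_orthogonal' _ _).1 (Submodule.mem_inf.1 hmem).2 v
      (Submodule.subset_span hvA)
  · rw [← inner_projPerp_of_mem_orthogonal (Submodule.mem_inf.1 hmem).2]
    exact hdual v (Finset.mem_sdiff.2 ⟨hv, hvA⟩)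

omit [FiniteDimensional ℝ V] in
theorem eq_of_subset (hϖ : IsDualFamily Δ ϖ) {A S C : Finset V} (hAS : A ⊆ S) (hSC : S ⊆ C)
    (hCΔ : C ⊆ Δ) {γ : V} (hγ : γ ∈ C \ S) : ϖ S C γ = ϖ A C γ := by
  have hγA : γ ∈ C \ A := Finset.sdiff_subset_sdiff subset_rfl hAS hγ
  refine eq_of_mem_span_of_forall_inner_eq (Submodule.mem_inf.1 (hϖ S C hSC hCΔ γ hγ).1).1
    (Submodule.mem_inf.1 (hϖ A C (hAS.trans hSC) hCΔ γ hγA).1).1 fun v hv => ?_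
  rw [hϖ.inner_eq_ite hSC hCΔ hγ hv, hϖ.inner_eq_ite (hAS.trans hSC) hCΔ hγA hv]

omit [FiniteDimensional ℝ V] in
theorem tauHatFn_eq_prod (hϖ : IsDualFamily Δ ϖ) {A S C : Finset V} (hAS : A ⊆ S)
    (hSC : S ⊆ C) (hCΔ : C ⊆ Δ) (H : V) :
    tauHatFn ϖ S C H = ∏ γ ∈ C \ S, if 0 < ⟪ϖ A C γ, H⟫ then 1 else 0 := by
  rw [Finset.prod_boole, tauHatFn]
  exact if_congr (forall₂_congr fun γ hγ => by rw [hϖ.eq_of_subset hAS hSC hCΔ hγ]) rfl rfl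

end IsDualFamily

namespace Finset

variable {ι R : Type*} [DecidableEq ι] [CommRing R]

theorem sum_Icc_neg_one_pow_mul_prod_sdiff {A B : Finset ι} (hAB : A ⊆ B) (f : ι → R) :
    ∑ S ∈ Icc A B, (-1) ^ #(B \ S) * ∏ γ ∈ B \ S, f γ = ∏ γ ∈ B \ A, (1 - f γ) := by
  have h_inj : Set.InjOn (A ∪ ·) ((B \ A).powerset : Set (Finset ι)) := fun T hT T' hT' h => by
    rw [← union_sdiff_cancel_left (disjoint_of_subset_right (mem_powerset.1 hT) disjoint_sdiff),
      ← union_sdiff_cancel_left (disjoint_of_subset_right (mem_powerset.1 hT') disjoint_sdiff)]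
    exact congrArg (· \ A) h
  rw [Icc_eq_image_powerset hAB, sum_image h_inj]
  simp_rw [sub_eq_add_neg, prod_add, prod_const_one, one_mul, prod_neg, sdiff_union_distrib,
    ← sdiff_sdiff_left']

theorem sum_Icc_neg_one_pow_mul_prod_sdiff' {A B C : Finset ι} (hAB : A ⊆ B) (hBC : B ⊆ C)
    (f : ι → R) :
    ∑ S ∈ Icc A B, (-1) ^ #(B \ S) * ∏ γ ∈ C \ S, f γ =
      (∏ γ ∈ C \ B, f γ) * ∏ γ ∈ B \ A, (1 - f γ) := by
  rw [← sum_Icc_neg_one_pow_mul_prod_sdiff hAB, mul_sum]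
  refine sum_congr rfl fun S hS => ?_
  have hSB := (mem_Icc.1 hS).2
  rw [← prod_sdiff (sdiff_subset_sdiff hBC subset_rfl : B \ S ⊆ C \ S),
    sdiff_sdiff_sdiff_cancel_right hSB]
  ring

end Finset

theorem stmt_7_general
    (Δ : Finset V)
    (ϖ : Finset V → Finset V → V → V) (hϖ : IsDualFamily Δ ϖ)
    (A B C : Finset V) (hAB : A ⊆ B) (hBC : B ⊆ C) (hCΔ : C ⊆ Δ)
    (H : V) :
    ∑ S ∈ Finset.Icc A B, (-1 : ℝ) ^ (B \ S).card * tauHatFn ϖ S C H =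
      if (∀ γ ∈ B \ A, ⟪ϖ A C γ, H⟫ ≤ 0) ∧ (∀ γ ∈ C \ B, 0 < ⟪ϖ A C γ, H⟫)
      then 1 else 0 := by
  set g : V → ℝ := fun γ => if 0 < ⟪ϖ A C γ, H⟫ then 1 else 0
  have h_tau : ∀ S ∈ Finset.Icc A B, tauHatFn ϖ S C H = ∏ γ ∈ C \ S, g γ := fun S hS =>
    hϖ.tauHatFn_eq_prod (Finset.mem_Icc.1 hS).1 ((Finset.mem_Icc.1 hS).2.trans hBC) hCΔ H
  have h_compl : ∀ γ ∈ B \ A, 1 - g γ = if ⟪ϖ A C γ, H⟫ ≤ 0 then 1 else 0 := fun γ _ => by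
    by_cases h : 0 < ⟪ϖ A C γ, H⟫ <;> simp [g, h]
  rw [Finset.sum_congr rfl fun S hS => by rw [h_tau S hS],
    Finset.sum_Icc_neg_one_pow_mul_prod_sdiff' hAB hBC, Finset.prod_congr rfl h_compl,
    Finset.prod_boole, Finset.prod_boole, ite_zero_mul_ite_zero, mul_one]
  exact if_congr and_comm rfl rfl

/-- For `A ⊆ B ⊆ C ⊆ Δ`, with `(ϖ A C γ)_{γ ∈ C∖A}` the dual basis
`Δ̂_A^C`, the sum `∑_{S : A ⊆ S ⊆ B} (−1)^{|B∖S|} τ̂_S^C(H)` equals `1` if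
`⟪ϖ A C γ, H⟫ ≤ 0` for every `γ ∈ B∖A` and `⟪ϖ A C γ, H⟫ > 0` for every `γ ∈ C∖B`,
and equals `0` otherwise. -/
theorem stmt_7
    (Δ : Finset V)
    (hli : LinearIndependent ℝ ((↑) : ↥(Δ : Set V) → V))
    (hspan : Submodule.span ℝ (Δ : Set V) = ⊤)
    (hobtuse : ∀ α ∈ Δ, ∀ β ∈ Δ, α ≠ β → ⟪α, β⟫ ≤ 0)
    (ϖ : Finset V → Finset V → V → V) (hϖ : IsDualFamily Δ ϖ)
    (A B C : Finset V) (hAB : A ⊆ B) (hBC : B ⊆ C) (hCΔ : C ⊆ Δ)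
    (H : V) :
    ∑ S ∈ Finset.Icc A B, (-1 : ℝ) ^ (B \ S).card * tauHatFn ϖ S C H =
      if (∀ γ ∈ B \ A, ⟪ϖ A C γ, H⟫ ≤ 0) ∧ (∀ γ ∈ C \ B, 0 < ⟪ϖ A C γ, H⟫)
      then 1 else 0 :=
  stmt_7_general Δ ϖ hϖ A B C hAB hBC hCΔ H
end

section
/- Let Δ be an obtuse basis of V, let A ⊆ B ⊆ C ⊆ Δ be subsets, let X ∈ V, and let (ϖ_γ)_{γ ∈ C∖A} be the dual basis Δ̂_A^C. Let C(A,B,C;X) be the set of H ∈ V such that: ⟨γ_A, H⟩ > 0 for every γ ∈ B∖A; ⟨γ_A, H⟩ ≤ 0 for every γ ∈ C∖B; ⟨ϖ_γ, H − X⟩ > 0 for every γ ∈ C∖B; and ⟨ϖ_γ, H − X⟩ ≤ 0 for every γ ∈ B∖A. Then: (1) there exists a constant c > 0, depending only on V, Δ, A, B, C (not on X), such that every H ∈ C(A,B,C;X) satisfies ‖pr(H)‖ ≤ c‖pr(X)‖, where pr denotes the orthogonal projection onto V_A^C; (2) if ⟨α, X⟩ ≥ 0 for every α ∈ Δ, then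 C(A,B,C;X) is empty unless B = C; (3) if X = 0, then C(A,B,C;X) is empty unless A = C. -/
open scoped RealInnerProductSpace Classical

variable {V : Type*} [NormedAddCommGroup V] [InnerProductSpace ℝ V] [FiniteDimensional ℝ V]
  [DecidableEq V]

/-- Membership in the convex set `C(A, B, C; X)` of Statement 9. -/
def CMember (ϖ : Finset V → Finset V → V → V) (A B C : Finset V) (X H : V) : Prop :=
  (∀ γ ∈ B \ A, 0 < ⟪projPerp A γ, H⟫) ∧
  (∀ γ ∈ C \ B, ⟪projPerp A γ, H⟫ ≤ 0) ∧
  (∀ γ ∈ C \ B, 0 < ⟪ϖ A C γ, H - X⟫) ∧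
  (∀ γ ∈ B \ A, ⟪ϖ A C γ, H - X⟫ ≤ 0)

/-! Let `pr` be the orthogonal projection onto `V_A^C`. Expanding in the basis `(γ_A)` of
`V_A^C`, whose coordinates are read off by the dual basis,
`⟪pr Y, pr H⟫ = ∑_{γ ∈ C∖A} ⟪ϖ_γ, Y⟫ ⟪γ_A, H⟫`. For `H ∈ C(A,B,C;X)` and `Y = H - X` every
term is `≤ 0` by the sign conditions, so `‖pr H‖² ≤ ⟪pr X, pr H⟫`: this gives (1) with `c = 1`,
and for `X = 0` it forces `pr H = 0`, which contradicts the strict inequalities unless `A = C`.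

For (2), projecting an obtuse basis away from `A` keeps it obtuse (adding one vector `α` to `A`
is a Schur-complement step `⟪γ, δ⟫ - ⟪α, γ⟫⟪α, δ⟫ / ⟪α, α⟫`), and the projections still pair
nonnegatively with `X`. Splitting `pr (H - X) = w + u` into its parts along `B∖A` and `C∖B`,
these signs give `⟪w, u⟫ ≥ 0` and `⟪w + u, u⟫ ≤ 0`, so `u = 0`; but the `ϖ_γ`-coordinate of `u`
is positive for every `γ ∈ C∖B`. -/

open Submodule Finset

section Projection

variable {E : Type*} [NormedAddCommGroup E] [InnerProductSpace ℝ E]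

theorem Submodule.inner_starProjection_of_mem {K : Submodule ℝ E} [K.HasOrthogonalProjection]
    {w : E} (hw : w ∈ K) (v : E) : ⟪w, K.starProjection v⟫ = ⟪w, v⟫ := by
  rw [← inner_starProjection_left_eq_right, starProjection_eq_self_iff.mpr hw]

theorem projPerp_eq_starProjection (A : Finset E) (γ : E) :
    projPerp A γ = (span ℝ (A : Set E))ᗮ.starProjection γ :=
  rfl

theorem projPerp_mem_orthogonal (A : Finset E) (γ : E) :
    projPerp A γ ∈ (span ℝ (A : Set E))ᗮ :=
  starProjection_apply_mem _ γ

theorem projPerp_eq_sub (A : Finset E) (γ : E) :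
    projPerp A γ = γ - (span ℝ (A : Set E)).starProjection γ :=
  starProjection_orthogonal_val γ

theorem projPerp_of_mem_orthogonal {A : Finset E} {w : E} (hw : w ∈ (span ℝ (A : Set E))ᗮ) :
    projPerp A w = w :=
  starProjection_eq_self_iff.mpr hw

theorem projPerp_of_mem_span {A : Finset E} {γ : E} (hγ : γ ∈ span ℝ (A : Set E)) :
    projPerp A γ = 0 := by
  rw [projPerp_eq_sub, starProjection_eq_self_iff.mpr hγ, sub_self]

theorem projPerp_sum_smul (A : Finset E) (s : Finset E) (f : E → ℝ) :
    projPerp A (∑ γ ∈ s, f γ • γ) = ∑ γ ∈ s, f γ • projPerp A γ :=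
  map_sum ((span ℝ (A : Set E))ᗮ.starProjection.toLinearMap.restrictScalars ℝ) _ _ |>.trans
    (sum_congr rfl fun _ _ => map_smul _ _ _)

theorem inner_projPerp_projPerp (A : Finset E) (γ δ : E) :
    ⟪projPerp A γ, projPerp A δ⟫ = ⟪projPerp A γ, δ⟫ :=
  inner_starProjection_of_mem (projPerp_mem_orthogonal A γ) δ

theorem sub_projPerp_mem_span (A : Finset E) (γ : E) :
    γ - projPerp A γ ∈ span ℝ (A : Set E) := by
  rw [projPerp_eq_sub, sub_sub_cancel]
  exact starProjection_apply_mem _ γ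

theorem projPerp_insert (A : Finset E) (α γ : E) :
    projPerp (insert α A) γ = projPerp A γ -
      (⟪projPerp A α, projPerp A γ⟫ / ⟪projPerp A α, projPerp A α⟫) • projPerp A α := by
  set a := projPerp A α
  set u := projPerp A γ - (⟪a, projPerp A γ⟫ / ⟪a, a⟫) • a
  have hA : span ℝ (A : Set E) ≤ span ℝ ((insert α A : Finset E) : Set E) :=
    span_mono (by simp [Set.subset_insert])
  have ha : a ∈ span ℝ ((insert α A : Finset E) : Set E) := by
    rw [← sub_sub_cancel α a]
    exact sub_mem (subset_span (by simp)) (hA (sub_projPerp_mem_span A α))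
  have hu : u ∈ (span ℝ (A : Set E))ᗮ :=
    sub_mem (projPerp_mem_orthogonal A γ) (smul_mem _ _ (projPerp_mem_orthogonal A α))
  have hαu : ⟪α, u⟫ = 0 := by
    rw [← projPerp_of_mem_orthogonal hu, projPerp_eq_starProjection,
      ← inner_starProjection_left_eq_right, ← projPerp_eq_starProjection]
    change ⟪a, u⟫ = 0
    rcases eq_or_ne a 0 with h0 | h0
    · rw [h0, inner_zero_left]
    · have : ⟪a, a⟫ ≠ 0 := inner_self_ne_zero.mpr h0
      simp only [u, inner_sub_right, real_inner_smul_right]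
      field_simp
      ring
  rw [projPerp_eq_starProjection]
  refine eq_starProjection_of_mem_of_inner_eq_zero ?_ fun w hw => ?_
  · rw [coe_insert, span_insert, ← inf_orthogonal]
    exact ⟨mem_orthogonal_singleton_iff_inner_right.mpr hαu, hu⟩
  · rw [show γ - u = (γ - projPerp A γ) + (⟪a, projPerp A γ⟫ / ⟪a, a⟫) • a by
      simp only [u]; abel]
    exact inner_right_of_mem_orthogonal
      (add_mem (hA (sub_projPerp_mem_span A γ)) (smul_mem _ _ ha)) hw

theorem inner_projPerp_insert (A : Finset E) (α γ δ : E) :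
    ⟪projPerp (insert α A) γ, projPerp (insert α A) δ⟫ = ⟪projPerp A γ, projPerp A δ⟫ -
      ⟪projPerp A α, projPerp A γ⟫ / ⟪projPerp A α, projPerp A α⟫ *
        ⟪projPerp A α, projPerp A δ⟫ := by
  rw [inner_projPerp_projPerp, projPerp_insert, inner_sub_left, real_inner_smul_left,
    ← inner_projPerp_projPerp A γ δ, ← inner_projPerp_projPerp A α δ]

theorem inner_projPerp_nonpos {A : Finset E}
    (hA : (A : Set E).Pairwise fun α β => ⟪α, β⟫ ≤ 0) {γ δ : E}
    (hγ : ∀ α ∈ A, ⟪α, γ⟫ ≤ 0) (hδ : ∀ α ∈ A, ⟪α, δ⟫ ≤ 0) (hγδ : ⟪γ, δ⟫ ≤ 0) :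
    ⟪projPerp A γ, projPerp A δ⟫ ≤ 0 := by
  induction A using Finset.induction_on generalizing γ δ with
  | empty => simpa [projPerp_of_mem_orthogonal] using hγδ
  | @insert α A hαA ih =>
    rw [coe_insert, Set.pairwise_insert_of_notMem hαA] at hA
    have hαγ := ih hA.1 (fun β hβ => (hA.2 β hβ).2)
      (fun β hβ => hγ β (mem_insert_of_mem hβ)) (hγ α (mem_insert_self α A))
    have hαδ := ih hA.1 (fun β hβ => (hA.2 β hβ).2)
      (fun β hβ => hδ β (mem_insert_of_mem hβ)) (hδ α (mem_insert_self α A))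
    have hγδ' := ih hA.1 (fun β hβ => hγ β (mem_insert_of_mem hβ))
      (fun β hβ => hδ β (mem_insert_of_mem hβ)) hγδ
    rw [inner_projPerp_insert, sub_nonpos]
    exact hγδ'.trans (mul_nonneg_of_nonpos_of_nonpos
      (div_nonpos_of_nonpos_of_nonneg hαγ real_inner_self_nonneg) hαδ)

theorem inner_projPerp_projPerp_nonpos {Δ A : Finset E}
    (hΔ : (Δ : Set E).Pairwise fun α β => ⟪α, β⟫ ≤ 0) (hA : A ⊆ Δ) {γ δ : E}
    (hγ : γ ∈ Δ) (hγA : γ ∉ A) (hδ : δ ∈ Δ) (hδA : δ ∉ A) (hγδ : γ ≠ δ) :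
    ⟪projPerp A γ, projPerp A δ⟫ ≤ 0 :=
  inner_projPerp_nonpos (hΔ.mono (coe_subset.mpr hA))
    (fun _ hα => hΔ (hA hα) hγ (ne_of_mem_of_not_mem hα hγA))
    (fun _ hα => hΔ (hA hα) hδ (ne_of_mem_of_not_mem hα hδA)) (hΔ hγ hδ hγδ)

theorem inner_projPerp_nonneg {Δ A : Finset E}
    (hΔ : (Δ : Set E).Pairwise fun α β => ⟪α, β⟫ ≤ 0) (hA : A ⊆ Δ) {γ X : E}
    (hγ : γ ∈ Δ) (hγA : γ ∉ A) (hX : ∀ α ∈ Δ, 0 ≤ ⟪α, X⟫) :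
    0 ≤ ⟪projPerp A γ, X⟫ := by
  have h := inner_projPerp_nonpos (δ := -X) (hΔ.mono (coe_subset.mpr hA))
    (fun _ hα => hΔ (hA hα) hγ (ne_of_mem_of_not_mem hα hγA))
    (fun α hα => by simpa using hX α (hA hα)) (by simpa using hX γ hγ)
  rwa [inner_projPerp_projPerp, inner_neg_right, neg_nonpos] at h

theorem inner_sum_smul_sum_smul_nonneg {ι : Type*} {S T : Finset ι} (v : ι → E) {a b : ι → ℝ}
    (ha : ∀ i ∈ S, a i ≤ 0) (hb : ∀ j ∈ T, 0 ≤ b j)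
    (hv : ∀ i ∈ S, ∀ j ∈ T, ⟪v i, v j⟫ ≤ 0) :
    0 ≤ ⟪∑ i ∈ S, a i • v i, ∑ j ∈ T, b j • v j⟫ := by
  rw [sum_inner]
  refine sum_nonneg fun i hi => ?_
  rw [real_inner_smul_left, inner_sum]
  refine mul_nonneg_of_nonpos_of_nonpos (ha i hi) (sum_nonpos fun j hj => ?_)
  rw [real_inner_smul_right]
  exact mul_nonpos_of_nonneg_of_nonpos (hb j hj) (hv i hi j hj)

-- The paper's `V_A^C`.
noncomputable abbrev spanPerp (A C : Finset E) : Submodule ℝ E :=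
  span ℝ (C : Set E) ⊓ (span ℝ (A : Set E))ᗮ

theorem projPerp_mem_spanPerp {A C : Finset E} (hAC : A ⊆ C) {γ : E} (hγ : γ ∈ C) :
    projPerp A γ ∈ spanPerp A C := by
  refine ⟨?_, projPerp_mem_orthogonal A γ⟩
  rw [← sub_sub_cancel γ (projPerp A γ)]
  exact sub_mem (subset_span hγ) (span_mono (coe_subset.mpr hAC) (sub_projPerp_mem_span A γ))

end Projection

section DualFamily

variable {E : Type*} [NormedAddCommGroup E] [InnerProductSpace ℝ E] [DecidableEq E]

theorem exists_eq_sum_smul_projPerp {A C : Finset E} {y : E} (hy : y ∈ spanPerp A C) :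
    ∃ f : E → ℝ, y = ∑ γ ∈ C \ A, f γ • projPerp A γ := by
  obtain ⟨f, -, hf⟩ := mem_span_finset.mp hy.1
  refine ⟨f, ?_⟩
  rw [← projPerp_of_mem_orthogonal hy.2, ← hf, projPerp_sum_smul]
  refine (sum_subset sdiff_subset fun γ hγC hγ => ?_).symm
  rw [projPerp_of_mem_span (subset_span (by simpa [hγC] using hγ)), smul_zero]

variable {Δ : Finset E} {ϖ : Finset E → Finset E → E → E} {A C : Finset E}

theorem IsDualFamily.inner_sum_smul_projPerp (hϖ : IsDualFamily Δ ϖ) (hAC : A ⊆ C)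
    (hCΔ : C ⊆ Δ) {s : Finset E} (hs : s ⊆ C \ A) (f : E → ℝ) {γ : E} (hγ : γ ∈ s) :
    ⟪ϖ A C γ, ∑ δ ∈ s, f δ • projPerp A δ⟫ = f γ := by
  have hdual := (hϖ A C hAC hCΔ γ (hs hγ)).2
  rw [inner_sum, sum_eq_single γ (fun δ hδ hne => ?_) (absurd hγ)]
  · rw [real_inner_smul_right, hdual γ (hs hγ), if_pos rfl, mul_one]
  · rw [real_inner_smul_right, hdual δ (hs hδ), if_neg hne, mul_zero]

theorem IsDualFamily.starProjection_eq_sum (hϖ : IsDualFamily Δ ϖ) (hAC : A ⊆ C)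
    (hCΔ : C ⊆ Δ) (Y : E) :
    (spanPerp A C).starProjection Y = ∑ γ ∈ C \ A, ⟪ϖ A C γ, Y⟫ • projPerp A γ := by
  obtain ⟨f, hf⟩ := exists_eq_sum_smul_projPerp (starProjection_apply_mem (spanPerp A C) Y)
  rw [hf]
  refine sum_congr rfl fun γ hγ => congrArg (· • projPerp A γ) ?_
  rw [← hϖ.inner_sum_smul_projPerp hAC hCΔ subset_rfl f hγ, ← hf,
    inner_starProjection_of_mem (hϖ A C hAC hCΔ γ hγ).1]

theorem IsDualFamily.inner_starProjection_eq_sum (hϖ : IsDualFamily Δ ϖ) (hAC : A ⊆ C)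
    (hCΔ : C ⊆ Δ) (Y H : E) :
    ⟪(spanPerp A C).starProjection Y, (spanPerp A C).starProjection H⟫ =
      ∑ γ ∈ C \ A, ⟪ϖ A C γ, Y⟫ * ⟪projPerp A γ, H⟫ := by
  rw [hϖ.starProjection_eq_sum hAC hCΔ Y, sum_inner]
  refine sum_congr rfl fun γ hγ => ?_
  rw [real_inner_smul_left,
    inner_starProjection_of_mem (projPerp_mem_spanPerp hAC (mem_sdiff.mp hγ).1)]

end DualFamily

section ConvexSet

variable {E : Type*} [NormedAddCommGroup E] [InnerProductSpace ℝ E] [DecidableEq E]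
  {Δ : Finset E} {ϖ : Finset E → Finset E → E → E} {A B C : Finset E} {X H : E}

theorem CMember.inner_starProjection_sub_nonpos (hm : CMember ϖ A B C X H)
    (hϖ : IsDualFamily Δ ϖ) (hAB : A ⊆ B) (hBC : B ⊆ C) (hCΔ : C ⊆ Δ) :
    ⟪(spanPerp A C).starProjection (H - X), (spanPerp A C).starProjection H⟫ ≤ 0 := by
  obtain ⟨hBpos, hCnonpos, hCpos, hBnonpos⟩ := hm
  rw [hϖ.inner_starProjection_eq_sum (hAB.trans hBC) hCΔ]
  refine sum_nonpos fun γ hγ => ?_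
  obtain ⟨hγC, hγA⟩ := mem_sdiff.mp hγ
  by_cases hγB : γ ∈ B
  · have hγ' : γ ∈ B \ A := mem_sdiff.mpr ⟨hγB, hγA⟩
    exact mul_nonpos_of_nonpos_of_nonneg (hBnonpos γ hγ') (hBpos γ hγ').le
  · have hγ' : γ ∈ C \ B := mem_sdiff.mpr ⟨hγC, hγB⟩
    exact mul_nonpos_of_nonneg_of_nonpos (hCpos γ hγ').le (hCnonpos γ hγ')

theorem CMember.norm_starProjection_le (hm : CMember ϖ A B C X H)
    (hϖ : IsDualFamily Δ ϖ) (hAB : A ⊆ B) (hBC : B ⊆ C) (hCΔ : C ⊆ Δ) :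
    ‖(spanPerp A C).starProjection H‖ ≤ ‖(spanPerp A C).starProjection X‖ := by
  have h := hm.inner_starProjection_sub_nonpos hϖ hAB hBC hCΔ
  rw [map_sub, inner_sub_left, sub_nonpos, real_inner_self_eq_norm_mul_norm] at h
  rcases (norm_nonneg ((spanPerp A C).starProjection H)).eq_or_lt with h0 | hpos
  · exact h0 ▸ norm_nonneg _
  · exact le_of_mul_le_mul_right (h.trans (real_inner_le_norm _ _)) hpos

theorem CMember.eq_of_zero (hm : CMember ϖ A B C 0 H) (hϖ : IsDualFamily Δ ϖ) (hAB : A ⊆ B)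
    (hBC : B ⊆ C) (hCΔ : C ⊆ Δ) : A = C := by
  have hp : (spanPerp A C).starProjection H = 0 := by
    have h := hm.inner_starProjection_sub_nonpos hϖ hAB hBC hCΔ
    rwa [sub_zero, real_inner_self_nonpos] at h
  obtain ⟨hBpos, -, hCpos, -⟩ := hm
  by_contra hne
  obtain ⟨γ, hγC, hγA⟩ := exists_of_ssubset ((hAB.trans hBC).ssubset_of_ne hne)
  by_cases hγB : γ ∈ B
  · have h := hBpos γ (mem_sdiff.mpr ⟨hγB, hγA⟩)
    rw [← inner_starProjection_of_mem (projPerp_mem_spanPerp (hAB.trans hBC) hγC), hp,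
      inner_zero_right] at h
    exact h.false
  · have h := hCpos γ (mem_sdiff.mpr ⟨hγC, hγB⟩)
    rw [sub_zero, ← inner_starProjection_of_mem
      (hϖ A C (hAB.trans hBC) hCΔ γ (mem_sdiff.mpr ⟨hγC, hγA⟩)).1, hp, inner_zero_right] at h
    exact h.false

theorem CMember.sum_sdiff_smul_projPerp_eq_zero (hm : CMember ϖ A B C X H)
    (hΔ : (Δ : Set E).Pairwise fun α β => ⟪α, β⟫ ≤ 0) (hϖ : IsDualFamily Δ ϖ) (hAB : A ⊆ B)
    (hBC : B ⊆ C) (hCΔ : C ⊆ Δ) (hX : ∀ α ∈ Δ, 0 ≤ ⟪α, X⟫) :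
    ∑ γ ∈ C \ B, ⟪ϖ A C γ, H - X⟫ • projPerp A γ = 0 := by
  obtain ⟨-, hCnonpos, hCpos, hBnonpos⟩ := hm
  have hAC := hAB.trans hBC
  have hCB {γ : E} (hγ : γ ∈ C \ B) : γ ∈ Δ ∧ γ ∉ A :=
    ⟨hCΔ (mem_sdiff.mp hγ).1, fun h => (mem_sdiff.mp hγ).2 (hAB h)⟩
  set w := ∑ γ ∈ B \ A, ⟪ϖ A C γ, H - X⟫ • projPerp A γ
  set u := ∑ γ ∈ C \ B, ⟪ϖ A C γ, H - X⟫ • projPerp A γ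
  have hsplit : (spanPerp A C).starProjection (H - X) = w + u := by
    rw [hϖ.starProjection_eq_sum hAC hCΔ, ← sdiff_union_sdiff_cancel hBC hAB,
      sum_union (disjoint_sdiff_self_left.mono_right sdiff_subset), add_comm]
  have hwu : 0 ≤ ⟪w, u⟫ := by
    refine inner_sum_smul_sum_smul_nonneg _ hBnonpos (fun γ hγ => (hCpos γ hγ).le)
      fun i hi j hj => ?_
    obtain ⟨hiB, hiA⟩ := mem_sdiff.mp hi
    exact inner_projPerp_projPerp_nonpos hΔ (hAC.trans hCΔ) (hCΔ (hBC hiB)) hiA (hCB hj).1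
      (hCB hj).2 (ne_of_mem_of_not_mem hiB (mem_sdiff.mp hj).2)
  have hyu : ⟪w + u, u⟫ ≤ 0 := by
    rw [← hsplit, real_inner_comm, inner_starProjection_of_mem
      (sum_mem fun γ hγ => smul_mem _ _ (projPerp_mem_spanPerp hAC (mem_sdiff.mp hγ).1)),
      sum_inner]
    refine sum_nonpos fun γ hγ => ?_
    have hγX := inner_projPerp_nonneg hΔ (hAC.trans hCΔ) (hCB hγ).1 (hCB hγ).2 hX
    rw [real_inner_smul_left]
    refine mul_nonpos_of_nonneg_of_nonpos (hCpos γ hγ).le ?_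
    rw [inner_sub_right]
    linarith [hCnonpos γ hγ]
  rw [← real_inner_self_nonpos]
  rw [inner_add_left] at hyu
  linarith

theorem CMember.eq_of_forall_inner_nonneg (hm : CMember ϖ A B C X H)
    (hΔ : (Δ : Set E).Pairwise fun α β => ⟪α, β⟫ ≤ 0) (hϖ : IsDualFamily Δ ϖ) (hAB : A ⊆ B)
    (hBC : B ⊆ C) (hCΔ : C ⊆ Δ) (hX : ∀ α ∈ Δ, 0 ≤ ⟪α, X⟫) : B = C := by
  by_contra hne
  obtain ⟨γ, hγC, hγB⟩ := exists_of_ssubset (hBC.ssubset_of_ne hne)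
  have hγ : γ ∈ C \ B := mem_sdiff.mpr ⟨hγC, hγB⟩
  have hcoord := hϖ.inner_sum_smul_projPerp (hAB.trans hBC) hCΔ
    (sdiff_subset_sdiff subset_rfl hAB) (fun δ => ⟪ϖ A C δ, H - X⟫) hγ
  rw [hm.sum_sdiff_smul_projPerp_eq_zero hΔ hϖ hAB hBC hCΔ hX, inner_zero_right] at hcoord
  have hpos : 0 < ⟪ϖ A C γ, H - X⟫ := hm.2.2.1 γ hγ
  exact hpos.ne hcoord

end ConvexSet

theorem stmt_9_general
    (Δ : Finset V)
    (hobtuse : ∀ α ∈ Δ, ∀ β ∈ Δ, α ≠ β → ⟪α, β⟫ ≤ 0)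
    (ϖ : Finset V → Finset V → V → V) (hϖ : IsDualFamily Δ ϖ)
    (A B C : Finset V) (hAB : A ⊆ B) (hBC : B ⊆ C) (hCΔ : C ⊆ Δ) :
    (∃ c : ℝ, 0 < c ∧ ∀ X H : V, CMember ϖ A B C X H →
      ‖(Submodule.orthogonalProjectionOnto
          (Submodule.span ℝ (C : Set V) ⊓ (Submodule.span ℝ (A : Set V))ᗮ) H : V)‖ ≤
        c * ‖(Submodule.orthogonalProjectionOnto
          (Submodule.span ℝ (C : Set V) ⊓ (Submodule.span ℝ (A : Set V))ᗮ) X : V)‖) ∧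
    (∀ X : V, (∀ α ∈ Δ, 0 ≤ ⟪α, X⟫) → B ≠ C → ∀ H : V, ¬ CMember ϖ A B C X H) ∧
    (A ≠ C → ∀ H : V, ¬ CMember ϖ A B C (0 : V) H) := by
  refine ⟨⟨1, one_pos, fun X H hm => ?_⟩, fun X hX hne H hm => ?_, fun hne H hm => ?_⟩
  · rw [one_mul]
    exact hm.norm_starProjection_le hϖ hAB hBC hCΔ
  · exact hne (hm.eq_of_forall_inner_nonneg hobtuse hϖ hAB hBC hCΔ hX)
  · exact hne (hm.eq_of_zero hϖ hAB hBC hCΔ)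

/-- (1) There is `c > 0`, independent of `X`, such that any
`H ∈ C(A,B,C;X)` satisfies `‖pr H‖ ≤ c ‖pr X‖` where `pr` is the orthogonal projection onto
`V_A^C = span C ⊓ (span A)ᗮ`; (2) if `⟪α, X⟫ ≥ 0` for all `α ∈ Δ` then `C(A,B,C;X)` is
empty unless `B = C`; (3) if `X = 0` then `C(A,B,C;X)` is empty unless `A = C`. -/
theorem stmt_9
    (Δ : Finset V)
    (hli : LinearIndependent ℝ ((↑) : ↥(Δ : Set V) → V))
    (hspan : Submodule.span ℝ (Δ : Set V) = ⊤)
    (hobtuse : ∀ α ∈ Δ, ∀ β ∈ Δ, α ≠ β → ⟪α, β⟫ ≤ 0)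
    (ϖ : Finset V → Finset V → V → V) (hϖ : IsDualFamily Δ ϖ)
    (A B C : Finset V) (hAB : A ⊆ B) (hBC : B ⊆ C) (hCΔ : C ⊆ Δ) :
    (∃ c : ℝ, 0 < c ∧ ∀ X H : V, CMember ϖ A B C X H →
      ‖(Submodule.orthogonalProjectionOnto
          (Submodule.span ℝ (C : Set V) ⊓ (Submodule.span ℝ (A : Set V))ᗮ) H : V)‖ ≤
        c * ‖(Submodule.orthogonalProjectionOnto
          (Submodule.span ℝ (C : Set V) ⊓ (Submodule.span ℝ (A : Set V))ᗮ) X : V)‖) ∧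
    (∀ X : V, (∀ α ∈ Δ, 0 ≤ ⟪α, X⟫) → B ≠ C → ∀ H : V, ¬ CMember ϖ A B C X H) ∧
    (A ≠ C → ∀ H : V, ¬ CMember ϖ A B C (0 : V) H) :=
  stmt_9_general Δ hobtuse ϖ hϖ A B C hAB hBC hCΔ
end
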